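/- arXiv:2006.02124 — 2 statements merged into one kernel-verified Lean document; each statement's English description precedes it below -/
import Mathlib

section
/- Let G be a graph, H a graph with root vertex v ∈ V(H), and let f be a γ_I(G∘_v H)-function such that B_f = {x ∈ V(G) : ω(f_x) = γ_I(H) − 1} is nonempty. Then for every x ∈ A_f = {x ∈ V(G) : ω(f_x) ≥ γ_I(H)} with f(x) ∈ {0,1} one has ω(f_x) = γ_I(H), and for every x ∈ A_f with f(x) = 2 one has ω(f_x) ≤ γ_I(H) + 1. -/
open Finset

open scoped Classical

/-- An Italian dominating function on a finite simple graph: values in {0,1,2} and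
every vertex with value 0 has neighbour values summing to at least 2. -/
noncomputable def IsIDF {α : Type*} [Fintype α] (G : SimpleGraph α) (f : α → ℕ) : Prop :=
  (∀ u, f u ≤ 2) ∧
    ∀ u, f u = 0 → 2 ≤ ∑ w ∈ Finset.univ.filter (fun w => G.Adj u w), f w

/-- The Italian domination number γ_I(G). -/
noncomputable def italianNumber {α : Type*} [Fintype α] (G : SimpleGraph α) : ℕ :=
  sInf {n | ∃ f : α → ℕ, IsIDF G f ∧ ∑ u, f u = n}

/-- A γ_I(G)-function: an IDF on G of minimum weight. -/
noncomputable def IsMinIDF {α : Type*} [Fintype α] (G : SimpleGraph α) (f : α → ℕ) : Prop :=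
  IsIDF G f ∧ ∑ u, f u = italianNumber G

/-- D is a dominating set of G. -/
def IsDomSet {α : Type*} (G : SimpleGraph α) (D : Set α) : Prop :=
  ∀ u ∉ D, ∃ w ∈ D, G.Adj u w

/-- The domination number γ(G). -/
noncomputable def dominationNumber {α : Type*} [Fintype α] (G : SimpleGraph α) : ℕ :=
  sInf {n | ∃ D : Finset α, IsDomSet G ↑D ∧ D.card = n}

/-- The degree of a vertex. -/
noncomputable def deg {α : Type*} [Fintype α] (G : SimpleGraph α) (u : α) : ℕ :=
  (Finset.univ.filter (fun w => G.Adj u w)).card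

/-- The rooted product G∘_v H: one copy of H for each vertex of G, the root v of the
x-th copy being identified with the vertex x of G. The pair (x, y) is the vertex y of
the x-th copy of H; in particular (x, v) is the vertex x of G. -/
def rootedProd {α β : Type*} (G : SimpleGraph α) (H : SimpleGraph β) (v : β) :
    SimpleGraph (α × β) where
  Adj p q := (p.1 = q.1 ∧ H.Adj p.2 q.2) ∨ (p.2 = v ∧ q.2 = v ∧ G.Adj p.1 q.1)
  symm := by
    constructor
    rintro ⟨x, y⟩ ⟨x', y'⟩ (⟨h1, h2⟩ | ⟨h1, h2, h3⟩)
    · exact Or.inl ⟨h1.symm, h2.symm⟩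
    · exact Or.inr ⟨h2, h1, h3.symm⟩
  loopless := by
    constructor
    rintro ⟨x, y⟩ (⟨_, h⟩ | ⟨_, _, h⟩)
    · exact H.loopless.irrefl _ h
    · exact G.loopless.irrefl _ h

/-- The weight ω(f_x) of the restriction of f to the copy H_x. -/
def copyWeight {α β : Type*} [Fintype β] (f : α × β → ℕ) (x : α) : ℕ :=
  ∑ y, f (x, y)

/-- The graph H − {v} obtained from H by deleting the vertex v. -/
def deleteVertex {β : Type*} (H : SimpleGraph β) (v : β) : SimpleGraph {w : β // w ≠ v} :=
  SimpleGraph.induce {w : β | w ≠ v} H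

/-! Pick x₀ with ω(f_{x₀}) = γ_I(H) − 1. Then f(x₀) = 0, since otherwise f_{x₀} would be an IDF
of H. For any x, replace f_x by f_{x₀} with its root value raised to k = max(1, f(x)): the root of
H_x is then dominated by itself, and since its value did not drop, the vertices of G outside H_x
stay dominated, so this is again an IDF of G∘_v H, of weight ω(f) − ω(f_x) + k + γ_I(H) − 1.
Minimality of f gives ω(f_x) ≤ γ_I(H) − 1 + k, which is the claim. -/

lemma italianNumber_le {α : Type*} [Fintype α] {G : SimpleGraph α} {f : α → ℕ}
    (hf : IsIDF G f) : italianNumber G ≤ ∑ u, f u :=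
  Nat.sInf_le ⟨f, hf, rfl⟩

lemma IsIDF.sum_pos {α : Type*} [Fintype α] [Nonempty α] {G : SimpleGraph α} {f : α → ℕ}
    (hf : IsIDF G f) : 0 < ∑ u, f u := by
  by_contra! h
  have hzero : ∀ u, f u = 0 := fun u => Finset.sum_eq_zero_iff.mp (by omega) u (mem_univ u)
  have h2 := hf.2 (Classical.arbitrary α) (hzero _)
  simp [hzero] at h2

lemma one_le_italianNumber {α : Type*} [Fintype α] [Nonempty α] (G : SimpleGraph α) :
    1 ≤ italianNumber G :=
  le_csInf ⟨_, fun _ => 2, ⟨fun _ => le_rfl, fun _ h => absurd h two_ne_zero⟩, rfl⟩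
    fun _ ⟨_, hf, hn⟩ => hn ▸ hf.sum_pos

@[simp]
lemma rootedProd_adj {α β : Type*} {G : SimpleGraph α} {H : SimpleGraph β} {v : β}
    {p q : α × β} :
    (rootedProd G H v).Adj p q ↔
      (p.1 = q.1 ∧ H.Adj p.2 q.2) ∨ (p.2 = v ∧ q.2 = v ∧ G.Adj p.1 q.1) :=
  Iff.rfl

noncomputable def replaceCopy {α β : Type*} (f : α × β → ℕ) (x : α) (g : β → ℕ) : α × β → ℕ :=
  fun p => if p.1 = x then g p.2 else f p

section RootedProduct

variable {α β : Type*} [Fintype α] [Fintype β] {G : SimpleGraph α} {H : SimpleGraph β} {v : β}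
  {f : α × β → ℕ}

namespace rootedProd

lemma sum_adj_copy_le (h : α × β → ℕ) (x : α) (y : β) :
    ∑ u ∈ univ.filter (H.Adj y ·), h (x, u) ≤
      ∑ p ∈ univ.filter ((rootedProd G H v).Adj (x, y) ·), h p := by
  refine (Finset.sum_map _ (Function.Embedding.sectR x β) h).symm.trans_le
    (Finset.sum_le_sum_of_subset fun p hp => ?_)
  obtain ⟨u, hu, rfl⟩ := Finset.mem_map.mp hp
  simp_all

lemma sum_adj_eq_of_ne_root (h : α × β → ℕ) (x : α) {y : β} (hy : y ≠ v) :
    ∑ p ∈ univ.filter ((rootedProd G H v).Adj (x, y) ·), h p =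
      ∑ u ∈ univ.filter (H.Adj y ·), h (x, u) := by
  refine Eq.trans ?_ (Finset.sum_map _ (Function.Embedding.sectR x β) h)
  congr 1
  ext ⟨z, u⟩
  simp only [mem_filter, mem_univ, true_and, rootedProd_adj, hy, false_and, or_false, mem_map,
    Function.Embedding.sectR_apply, Prod.mk.injEq]
  constructor
  · rintro ⟨rfl, hu⟩
    exact ⟨u, hu, rfl, rfl⟩
  · rintro ⟨u, hu, rfl, rfl⟩
    exact ⟨rfl, hu⟩

end rootedProd

lemma IsIDF.update_copy_root (hf : IsIDF (rootedProd G H v) f) (x : α)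
    {k : ℕ} (hk0 : k ≠ 0) (hk2 : k ≤ 2) (hfk : f (x, v) ≤ k) :
    IsIDF H (Function.update (fun y => f (x, y)) v k) := by
  have hle : ∀ y, f (x, y) ≤ Function.update (fun y => f (x, y)) v k y := by
    intro y
    rcases eq_or_ne y v with rfl | hy
    · simpa using hfk
    · simp [hy]
  refine ⟨fun y => ?_, fun y hy0 => ?_⟩
  · rcases eq_or_ne y v with rfl | hy
    · simpa using hk2
    · simpa [hy] using hf.1 (x, y)
  · have hy : y ≠ v := by rintro rfl; simp [hk0] at hy0
    have hfy : f (x, y) = 0 := by simpa [hy] using hy0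
    calc 2 ≤ ∑ p ∈ univ.filter ((rootedProd G H v).Adj (x, y) ·), f p := hf.2 _ hfy
      _ = ∑ u ∈ univ.filter (H.Adj y ·), f (x, u) := rootedProd.sum_adj_eq_of_ne_root f x hy
      _ ≤ _ := Finset.sum_le_sum fun u _ => hle u

lemma IsIDF.copy_of_root_ne_zero (hf : IsIDF (rootedProd G H v) f)
    {x : α} (hx : f (x, v) ≠ 0) : IsIDF H (fun y => f (x, y)) := by
  simpa using hf.update_copy_root x hx (hf.1 _) le_rfl

lemma sum_replaceCopy_add_copyWeight (f : α × β → ℕ) (x : α) (g : β → ℕ) :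
    ∑ p, replaceCopy f x g p + copyWeight f x = ∑ p, f p + ∑ y, g y := by
  have hcopies : ∀ z, ∑ y, replaceCopy f x g (z, y) =
      Function.update (copyWeight f) x (∑ y, g y) z := by
    intro z
    rcases eq_or_ne z x with rfl | hz
    · simp [replaceCopy]
    · simp [replaceCopy, hz, copyWeight]
  rw [Fintype.sum_prod_type, Fintype.sum_prod_type]
  change ∑ z, ∑ y, replaceCopy f x g (z, y) + _ = ∑ z, copyWeight f z + _
  rw [Finset.sum_congr rfl fun z _ => hcopies z, Finset.sum_update_of_mem (mem_univ x),
    Finset.sum_eq_add_sum_sdiff_singleton_of_mem (mem_univ x) (copyWeight f)]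
  ring

lemma isIDF_replaceCopy (hf : IsIDF (rootedProd G H v) f) (x : α) {g : β → ℕ} (hg : IsIDF H g)
    (hgv : f (x, v) ≤ g v) :
    IsIDF (rootedProd G H v) (replaceCopy f x g) := by
  refine ⟨fun ⟨z, y⟩ => ?_, fun ⟨z, y⟩ h0 => ?_⟩
  · simp only [replaceCopy]
    split_ifs
    exacts [hg.1 y, hf.1 _]
  rcases eq_or_ne z x with rfl | hz
  · have hy0 : g y = 0 := by simpa [replaceCopy] using h0
    calc 2 ≤ ∑ u ∈ univ.filter (H.Adj y ·), g u := hg.2 y hy0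
      _ = ∑ u ∈ univ.filter (H.Adj y ·), replaceCopy f z g (z, u) := by simp [replaceCopy]
      _ ≤ _ := rootedProd.sum_adj_copy_le _ z y
  · have hzy : f (z, y) = 0 := by simpa [replaceCopy, hz] using h0
    refine (hf.2 _ hzy).trans (Finset.sum_le_sum fun ⟨z', u⟩ hadj => ?_)
    simp only [mem_filter, mem_univ, true_and, rootedProd_adj] at hadj
    rcases eq_or_ne z' x with rfl | hz'
    · obtain ⟨rfl, -⟩ | ⟨-, rfl, -⟩ := hadj
      · exact absurd rfl hz
      · simpa [replaceCopy] using hgv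
    · simp [replaceCopy, hz']

namespace IsMinIDF

lemma copyWeight_le (hf : IsMinIDF (rootedProd G H v) f) (x : α) {g : β → ℕ} (hg : IsIDF H g)
    (hgv : f (x, v) ≤ g v) : copyWeight f x ≤ ∑ y, g y := by
  have hmin := italianNumber_le (isIDF_replaceCopy hf.1 x hg hgv)
  have hsum := sum_replaceCopy_add_copyWeight f x g
  rw [hf.2] at hsum
  omega

lemma root_eq_zero_of_copyWeight_lt (hf : IsMinIDF (rootedProd G H v) f) {x : α}
    (hx : copyWeight f x < italianNumber H) : f (x, v) = 0 := by
  by_contra h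
  exact (italianNumber_le (hf.1.copy_of_root_ne_zero h)).not_gt hx

lemma copyWeight_le_of_copyWeight_eq_pred (hf : IsMinIDF (rootedProd G H v) f) {x₀ : α}
    (hx₀ : copyWeight f x₀ = italianNumber H - 1) (x : α) :
    copyWeight f x + 1 ≤ max 1 (f (x, v)) + italianNumber H := by
  have : Nonempty β := ⟨v⟩
  have hpos := one_le_italianNumber H
  have hroot : f (x₀, v) = 0 := hf.root_eq_zero_of_copyWeight_lt (by omega)
  set k := max 1 (f (x, v))
  have hg := hf.1.update_copy_root x₀ (k := k) (by positivity) (max_le one_le_two (hf.1.1 _))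
    (by simp [hroot])
  have hsum : ∑ y, Function.update (fun y => f (x₀, y)) v k y = k + (italianNumber H - 1) := by
    rw [Finset.sum_update_of_mem (mem_univ v), ← hx₀, copyWeight,
      Finset.sum_eq_add_sum_sdiff_singleton_of_mem (mem_univ v), hroot, zero_add]
  have := hf.copyWeight_le x hg (by simp [k])
  omega

end IsMinIDF

end RootedProduct

theorem stmt2_general {α β : Type*} [Fintype α] [Fintype β]
    (G : SimpleGraph α) (H : SimpleGraph β) (v : β)
    (f : α × β → ℕ) (hf : IsMinIDF (rootedProd G H v) f)
    (hB : ∃ x : α, copyWeight f x = italianNumber H - 1) :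
    (∀ x : α, italianNumber H ≤ copyWeight f x → (f (x, v) = 0 ∨ f (x, v) = 1) →
      copyWeight f x = italianNumber H) ∧
    (∀ x : α, italianNumber H ≤ copyWeight f x → f (x, v) = 2 →
      copyWeight f x ≤ italianNumber H + 1) := by
  obtain ⟨x₀, hx₀⟩ := hB
  have hbound := hf.copyWeight_le_of_copyWeight_eq_pred hx₀
  refine ⟨fun x hx hroot => ?_, fun x hx hroot => ?_⟩ <;> have := hbound x <;> omega

/-- Lemma 3: for a γ_I(G∘_v H)-function f with B_f ≠ ∅, every
x ∈ A_f with f(x) ∈ {0,1} has ω(f_x) = γ_I(H), and every x ∈ A_f with f(x) = 2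
has ω(f_x) ≤ γ_I(H) + 1. -/
theorem stmt2 {α β : Type*} [Fintype α] [Nonempty α] [Fintype β]
    (G : SimpleGraph α) (H : SimpleGraph β) (v : β)
    (f : α × β → ℕ) (hf : IsMinIDF (rootedProd G H v) f)
    (hB : ∃ x : α, copyWeight f x = italianNumber H - 1) :
    (∀ x : α, italianNumber H ≤ copyWeight f x → (f (x, v) = 0 ∨ f (x, v) = 1) →
      copyWeight f x = italianNumber H) ∧
    (∀ x : α, italianNumber H ≤ copyWeight f x → f (x, v) = 2 →
      copyWeight f x ≤ italianNumber H + 1) :=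
  stmt2_general G H v f hf hB
end

section
/- Let G be a graph of maximum degree at least 2, H a graph and v ∈ V(H). Then γ_I(G∘_v H) = n(G)·γ_I(H) if and only if γ_I(H − {v}) ≥ γ_I(H). -/
open Finset

open scoped Classical

/-! If the root of some copy `H_x` gets weight `0` under an IDF `f` of `G ∘_v H`, the other
vertices of `H_x` see only `H_x`, so `f` restricts to an IDF of `H − v` there; otherwise it
restricts to an IDF of `H`. Hence, when `γ_I(H) ≤ γ_I(H − v)`, every copy carries weight at least
`γ_I(H)`, while a `γ_I(H)`-function on each copy gives the matching upper bound. Conversely, if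
`γ_I(H − v) < γ_I(H)`, put a `γ_I(H − v)`-function on every copy and weight `1` on every root
except one vertex `u` of degree at least `2` in `G`: the root of `H_u` is dominated by its
neighbours in `G`, and every copy then weighs at most `γ_I(H − v) + 1 ≤ γ_I(H)`, the copy `H_u`
strictly less. -/

noncomputable def neighbourSum {α : Type*} [Fintype α] (G : SimpleGraph α) (f : α → ℕ)
    (u : α) : ℕ :=
  ∑ w ∈ univ.filter (fun w => G.Adj u w), f w

section Basic

variable {α : Type*} [Fintype α] {G : SimpleGraph α}

lemma neighbourSum_mono {f g : α → ℕ} (h : f ≤ g) (u : α) :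
    neighbourSum G f u ≤ neighbourSum G g u :=
  Finset.sum_le_sum fun w _ => h w

lemma italianNumber_le_of_isIDF {f : α → ℕ} (hf : IsIDF G f) : italianNumber G ≤ ∑ u, f u :=
  Nat.sInf_le ⟨f, hf, rfl⟩

variable (G) in
lemma exists_isMinIDF : ∃ f : α → ℕ, IsMinIDF G f :=
  have hone : IsIDF G fun _ => 1 := ⟨fun _ => one_le_two, fun _ h => absurd h one_ne_zero⟩
  Nat.sInf_mem (s := {n | ∃ f : α → ℕ, IsIDF G f ∧ ∑ u, f u = n}) ⟨_, _, hone, rfl⟩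

end Basic

section DeleteVertex

variable {β : Type*} [Fintype β] {v : β}

lemma sum_subtype_ne_eq_sum_of_eq_zero {g : β → ℕ} (hg : g v = 0) :
    ∑ w : {w : β // w ≠ v}, g w = ∑ w, g w := by
  rw [← Finset.sum_subtype (univ.erase v) (by simp) g, Finset.sum_erase univ hg]

variable (H : SimpleGraph β)

lemma neighbourSum_deleteVertex {g : β → ℕ} (hg : g v = 0) (y : {w : β // w ≠ v}) :
    neighbourSum (deleteVertex H v) (fun w => g w) y = neighbourSum H g y := by
  simp only [neighbourSum, Finset.sum_filter]
  exact sum_subtype_ne_eq_sum_of_eq_zero (g := fun w => if H.Adj y w then g w else 0) (by simp [hg])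

lemma isIDF_deleteVertex_iff {g : β → ℕ} (hg : g v = 0) :
    IsIDF (deleteVertex H v) (fun w => g w) ↔
      (∀ w, g w ≤ 2) ∧ ∀ y ≠ v, g y = 0 → 2 ≤ neighbourSum H g y := by
  refine ⟨fun h => ⟨fun w => ?_, fun y hy hy0 => ?_⟩, fun h => ⟨fun w => h.1 w, fun y hy0 => ?_⟩⟩
  · by_cases hw : w = v
    · simp [hw, hg]
    · exact h.1 ⟨w, hw⟩
  · rw [← neighbourSum_deleteVertex H hg ⟨y, hy⟩]
    exact h.2 ⟨y, hy⟩ hy0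
  · exact (h.2 y y.2 hy0).trans_eq (neighbourSum_deleteVertex H hg y).symm

lemma exists_extension_isMinIDF_deleteVertex :
    ∃ g : β → ℕ, g v = 0 ∧ IsIDF (deleteVertex H v) (fun w => g w) ∧
      ∑ w, g w = italianNumber (deleteVertex H v) := by
  obtain ⟨f, hf, hwf⟩ := exists_isMinIDF (deleteVertex H v)
  let g : β → ℕ := fun w => if h : w = v then 0 else f ⟨w, h⟩
  have hg0 : g v = 0 := dif_pos rfl
  have hfg : (fun w : {w : β // w ≠ v} => g w) = f := funext fun w => dif_neg w.2
  exact ⟨g, hg0, hfg ▸ hf, by rw [← sum_subtype_ne_eq_sum_of_eq_zero hg0, hfg, hwf]⟩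

end DeleteVertex

noncomputable def rootedExtension {α β : Type*} (v : β) (u : α) (g : β → ℕ) (p : α × β) : ℕ :=
  if p.2 = v then (if p.1 = u then 0 else 1) else g p.2

lemma copyWeight_rootedExtension {α β : Type*} [Fintype β] {v : β} (u : α) {g : β → ℕ}
    (hg0 : g v = 0) (x : α) :
    copyWeight (rootedExtension v u g) x = (if x = u then 0 else 1) + ∑ y, g y := by
  have hsplit : ∀ y, rootedExtension v u g (x, y) =
      (if y = v then (if x = u then 0 else 1) else 0) + g y := fun y => by
    by_cases hy : y = v <;> simp [rootedExtension, hy, hg0]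
  simp only [copyWeight, hsplit, Finset.sum_add_distrib, Finset.sum_ite_eq', mem_univ, if_true]

section RootedProduct

variable {α β : Type*} [Fintype α] [Fintype β] (G : SimpleGraph α) (H : SimpleGraph β) (v : β)

lemma sum_eq_sum_copyWeight (f : α × β → ℕ) : ∑ p, f p = ∑ x, copyWeight f x :=
  Fintype.sum_prod_type f

lemma neighbourSum_copy_le_rootedProd (f : α × β → ℕ) (x : α) (y : β) :
    neighbourSum H (fun w => f (x, w)) y ≤ neighbourSum (rootedProd G H v) f (x, y) := by
  refine (Finset.sum_map (univ.filter fun w => H.Adj y w) (Function.Embedding.sectR x β) f).symm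
    |>.trans_le (Finset.sum_le_sum_of_subset fun p hp => ?_)
  simp only [mem_map, mem_filter, mem_univ, true_and, Function.Embedding.sectR_apply] at hp ⊢
  obtain ⟨w, hw, rfl⟩ := hp
  exact Or.inl ⟨rfl, hw⟩

lemma neighbourSum_rootedProd_of_ne (f : α × β → ℕ) (x : α) {y : β} (hy : y ≠ v) :
    neighbourSum (rootedProd G H v) f (x, y) = neighbourSum H (fun w => f (x, w)) y := by
  have hnbhd : univ.filter (fun p => (rootedProd G H v).Adj (x, y) p) =
      (univ.filter fun w => H.Adj y w).map (Function.Embedding.sectR x β) := by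
    ext ⟨x', w⟩
    simp only [mem_map, mem_filter, mem_univ, true_and, Function.Embedding.sectR_apply,
      Prod.mk.injEq]
    constructor
    · rintro (⟨rfl, h⟩ | ⟨h, -⟩)
      · exact ⟨w, h, rfl, rfl⟩
      · exact absurd h hy
    · rintro ⟨w, hw, rfl, rfl⟩
      exact Or.inl ⟨rfl, hw⟩
  rw [neighbourSum, hnbhd, Finset.sum_map]
  rfl

lemma neighbourSum_root_le_rootedProd (f : α × β → ℕ) (x : α) :
    neighbourSum G (fun x' => f (x', v)) x ≤ neighbourSum (rootedProd G H v) f (x, v) := by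
  refine (Finset.sum_map (univ.filter fun x' => G.Adj x x') (Function.Embedding.sectL α v) f).symm
    |>.trans_le (Finset.sum_le_sum_of_subset fun p hp => ?_)
  simp only [mem_map, mem_filter, mem_univ, true_and, Function.Embedding.sectL_apply] at hp ⊢
  obtain ⟨x', hx', rfl⟩ := hp
  exact Or.inr ⟨rfl, rfl, hx'⟩

variable {G H v}

lemma IsIDF.two_le_neighbourSum_copy {f : α × β → ℕ} (hf : IsIDF (rootedProd G H v) f)
    (x : α) {y : β} (hy : y ≠ v) (hy0 : f (x, y) = 0) :
    2 ≤ neighbourSum H (fun w => f (x, w)) y :=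
  neighbourSum_rootedProd_of_ne G H v f x hy ▸ hf.2 (x, y) hy0

lemma IsIDF.isIDF_copy {f : α × β → ℕ} (hf : IsIDF (rootedProd G H v) f) {x : α}
    (hx : f (x, v) ≠ 0) : IsIDF H (fun y => f (x, y)) :=
  ⟨fun y => hf.1 (x, y), fun _ hy0 =>
    hf.two_le_neighbourSum_copy x (fun hy => hx (hy ▸ hy0)) hy0⟩

lemma IsIDF.isIDF_deleteVertex_copy {f : α × β → ℕ} (hf : IsIDF (rootedProd G H v) f) {x : α}
    (hx : f (x, v) = 0) : IsIDF (deleteVertex H v) (fun y => f (x, y)) :=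
  (isIDF_deleteVertex_iff H (g := fun y => f (x, y)) hx).2
    ⟨fun y => hf.1 (x, y), fun _ hy hy0 => hf.two_le_neighbourSum_copy x hy hy0⟩

lemma italianNumber_le_copyWeight (hle : italianNumber H ≤ italianNumber (deleteVertex H v))
    {f : α × β → ℕ} (hf : IsIDF (rootedProd G H v) f) (x : α) :
    italianNumber H ≤ copyWeight f x := by
  by_cases hx : f (x, v) = 0
  · calc italianNumber H ≤ italianNumber (deleteVertex H v) := hle
      _ ≤ ∑ y : {w : β // w ≠ v}, f (x, y) :=
        italianNumber_le_of_isIDF (hf.isIDF_deleteVertex_copy hx)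
      _ = copyWeight f x := sum_subtype_ne_eq_sum_of_eq_zero (g := fun y => f (x, y)) hx
  · exact italianNumber_le_of_isIDF (hf.isIDF_copy hx)

variable (G v) in
lemma italianNumber_rootedProd_le :
    italianNumber (rootedProd G H v) ≤ Fintype.card α * italianNumber H := by
  obtain ⟨g, hg, hwg⟩ := exists_isMinIDF H
  have hidf : IsIDF (rootedProd G H v) (fun p => g p.2) :=
    ⟨fun p => hg.1 p.2, fun ⟨x, y⟩ hy0 =>
      (hg.2 y hy0).trans (neighbourSum_copy_le_rootedProd G H v (fun p => g p.2) x y)⟩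
  calc italianNumber (rootedProd G H v) ≤ ∑ p : α × β, g p.2 := italianNumber_le_of_isIDF hidf
    _ = Fintype.card α * italianNumber H := by
      simp [sum_eq_sum_copyWeight, copyWeight, hwg]

lemma isIDF_rootedExtension {u : α} (hu : 2 ≤ deg G u) {g : β → ℕ} (hg0 : g v = 0)
    (hg : IsIDF (deleteVertex H v) (fun w => g w)) :
    IsIDF (rootedProd G H v) (rootedExtension v u g) := by
  obtain ⟨hg2, hgdom⟩ := (isIDF_deleteVertex_iff H hg0).1 hg
  refine ⟨fun p => ?_, ?_⟩
  · unfold rootedExtension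
    split_ifs <;> simp [hg2]
  rintro ⟨x, y⟩ hF0
  by_cases hy : y = v
  · rw [hy] at hF0 ⊢
    have hx : x = u := by
      by_contra hx
      simp [rootedExtension, hx] at hF0
    have hdeg : neighbourSum G (fun x' => rootedExtension v u g (x', v)) u = deg G u := by
      rw [deg, Finset.card_eq_sum_ones]
      exact Finset.sum_congr rfl fun x' hx' => by
        simp [rootedExtension, (mem_filter.1 hx').2.ne']
    rw [hx]
    calc 2 ≤ deg G u := hu
      _ = _ := hdeg.symm
      _ ≤ _ := neighbourSum_root_le_rootedProd G H v _ u
  · have hle : g ≤ fun w => rootedExtension v u g (x, w) := fun w => by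
      by_cases hw : w = v <;> simp [rootedExtension, hw, hg0]
    calc 2 ≤ neighbourSum H g y := hgdom y hy (by simpa [rootedExtension, hy] using hF0)
      _ ≤ _ := neighbourSum_mono hle y
      _ ≤ _ := neighbourSum_copy_le_rootedProd G H v _ x y

lemma italianNumber_rootedProd_lt {u : α} (hu : 2 ≤ deg G u)
    (hlt : italianNumber (deleteVertex H v) < italianNumber H) :
    italianNumber (rootedProd G H v) < Fintype.card α * italianNumber H := by
  obtain ⟨g, hg0, hg, hwg⟩ := exists_extension_isMinIDF_deleteVertex (v := v) H
  have hweight := copyWeight_rootedExtension u hg0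
  calc italianNumber (rootedProd G H v) ≤ ∑ p, rootedExtension v u g p :=
        italianNumber_le_of_isIDF (isIDF_rootedExtension hu hg0 hg)
    _ = ∑ x, copyWeight (rootedExtension v u g) x := sum_eq_sum_copyWeight _
    _ < ∑ _x : α, italianNumber H := by
      refine Finset.sum_lt_sum (fun x _ => ?_) ⟨u, mem_univ u, ?_⟩
      · rw [hweight, hwg]; split_ifs <;> omega
      · rw [hweight, hwg]; simpa using hlt
    _ = Fintype.card α * italianNumber H := by simp

end RootedProduct

theorem stmt13_general {α β : Type*} [Fintype α] [Fintype β]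
    (G : SimpleGraph α) (hG : ∃ u : α, 2 ≤ deg G u)
    (H : SimpleGraph β) (v : β) :
    italianNumber (rootedProd G H v) = Fintype.card α * italianNumber H ↔
      italianNumber H ≤ italianNumber (deleteVertex H v) := by
  obtain ⟨u, hu⟩ := hG
  refine ⟨fun heq => ?_, fun hle => ?_⟩
  · by_contra! hlt
    exact (italianNumber_rootedProd_lt hu hlt).ne heq
  · refine le_antisymm (italianNumber_rootedProd_le G v) ?_
    obtain ⟨f, hf, hwf⟩ := exists_isMinIDF (rootedProd G H v)
    calc Fintype.card α * italianNumber H = ∑ _x : α, italianNumber H := by simp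
      _ ≤ ∑ x, copyWeight f x := Finset.sum_le_sum fun x _ => italianNumber_le_copyWeight hle hf x
      _ = italianNumber (rootedProd G H v) := by rw [← sum_eq_sum_copyWeight, hwf]

/-- Theorem: for G of maximum degree at least 2,
γ_I(G∘_v H) = n(G)γ_I(H) iff γ_I(H − {v}) ≥ γ_I(H). -/
theorem stmt13 {α β : Type*} [Fintype α] [Nonempty α] [Fintype β]
    (G : SimpleGraph α) (hG : ∃ u : α, 2 ≤ deg G u)
    (H : SimpleGraph β) (v : β) :
    italianNumber (rootedProd G H v) = Fintype.card α * italianNumber H ↔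
      italianNumber H ≤ italianNumber (deleteVertex H v) :=
  stmt13_general G hG H v
end
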